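/- Each of the six points (1:0:0:0), (0:1:0:0), (0:0:1:0), (0:0:0:1), (1:1:1:1), (1:0:1:0) is a singular point of the quartic surface Z8 in P^3 defined by y1 y2^2 y3 - y1^2 y2 y4 + y1 y2^2 y4 + y1^2 y3 y4 - 2 y1 y2 y3 y4 - y1 y3^2 y4 + y1 y3 y4^2 - y2 y3 y4^2 + y3^2 y4^2 = 0. -/

import Mathlib

open MvPolynomial

/-- The defining quartic of the surface `Z₈` in `ℙ³`. -/
noncomputable def Z8 : MvPolynomial (Fin 4) ℂ :=
  X 0 * X 1 ^ 2 * X 2 - X 0 ^ 2 * X 1 * X 3 + X 0 * X 1 ^ 2 * X 3 + X 0 ^ 2 * X 2 * X 3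
    - 2 * X 0 * X 1 * X 2 * X 3 - X 0 * X 2 ^ 2 * X 3 + X 0 * X 2 * X 3 ^ 2
    - X 1 * X 2 * X 3 ^ 2 + X 2 ^ 2 * X 3 ^ 2

/-- The six singular points of `Z₈`. -/
def Z8sing : Fin 6 → Fin 4 → ℂ :=
  ![![1, 0, 0, 0], ![0, 1, 0, 0], ![0, 0, 1, 0], ![0, 0, 0, 1], ![1, 1, 1, 1], ![1, 0, 1, 0]]

@[simp]
theorem Derivation.map_ofNat {R A M : Type*} [CommSemiring R] [CommSemiring A] [Algebra R A]
    [AddCommMonoid M] [Module A M] [Module R M] (D : Derivation R A M) (n : ℕ) [n.AtLeastTwo] :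
    D (no_index (OfNat.ofNat n : A)) = 0 :=
  D.map_natCast n

/-- Each of the six points is a singular point of the quartic surface `Z₈`: the quartic and
all four of its partial derivatives vanish there. -/
theorem Z8_six_singular_points :
    ∀ j : Fin 6, eval (Z8sing j) Z8 = 0 ∧ ∀ i : Fin 4, eval (Z8sing j) (pderiv i Z8) = 0 := by
  intro j
  refine ⟨?_, fun i => ?_⟩
  · fin_cases j <;> simp [Z8, Z8sing, one_add_one_eq_two]
  · fin_cases i <;> fin_cases j <;> simp [Z8, Z8sing, pderiv_X] <;> norm_num
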